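/- arXiv:1812.08420 — 2 statements merged into one kernel-verified Lean document; each statement's English description precedes it below -/
import Mathlib

section
/- Every graph in the family T' of order n is diameter-2-critical and has exactly 2n − 4 edges. -/
/-!
In a graph of `T'` the vertex `u` is adjacent to every vertex except `v`, and `v` reaches every
vertex within two steps through some `bᵢ`, so the diameter is 2. Each edge is the only edge on
every walk of length at most 2 between a suitable pair, because the `aᵢⱼ` and `wⱼ` have just two
neighbours and the `bᵢ` are pairwise non-adjacent: `u bᵢ` is critical for `{a_{i'j}, bᵢ}` and
`u aᵢⱼ` for `{aᵢⱼ, b_{i'}}` (`i' ≠ i`), `u wⱼ` for `{wⱼ, aᵢⱼ}`, `v bᵢ` and `aᵢⱼ bᵢ` for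
`{aᵢⱼ, v}`, and `v wⱼ` for `{wⱼ, v}`. Finally every vertex `x ∉ {u, v}` accounts for exactly two
edges, `u x` and `x (partner x)`, which gives `2(n - 2)` edges.
-/

variable {V : Type*}

/-- A graph has diameter at most 2: every two vertices are joined by a walk of length ≤ 2. -/
def DiamAtMostTwo (G : SimpleGraph V) : Prop :=
  ∀ x y : V, ∃ w : G.Walk x y, w.length ≤ 2

/-- A graph is diameter-2-critical: its diameter is 2 and deleting any edge increases it. -/
def IsD2C (G : SimpleGraph V) : Prop :=
  DiamAtMostTwo G ∧ (∃ x y : V, x ≠ y ∧ ¬ G.Adj x y) ∧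
    ∀ e ∈ G.edgeSet, ¬ DiamAtMostTwo (G.deleteEdges {e})

/-- `uv` is a dominating edge: every vertex is `u`, `v`, or adjacent to one of them. -/
def IsDominatingEdge (G : SimpleGraph V) (u v : V) : Prop :=
  G.Adj u v ∧ ∀ x : V, x = u ∨ x = v ∨ G.Adj u x ∨ G.Adj v x

/-- `e` is critical for the pair `{x,y}`: `x ≠ y`, they are at distance at most 2,
and every walk of length at most 2 from `x` to `y` uses `e`. -/
def CriticalFor (G : SimpleGraph V) (e : Sym2 V) (x y : V) : Prop :=
  x ≠ y ∧ (∃ w : G.Walk x y, w.length ≤ 2) ∧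
    ∀ w : G.Walk x y, w.length ≤ 2 → e ∈ w.edges

/-- `P_uv`: vertices `x ∉ {u,v}` such that `uv` is critical for `{x,v}` or `{x,u}`. -/
def Puv (G : SimpleGraph V) (u v : V) : Set V :=
  {x | x ≠ u ∧ x ≠ v ∧ (CriticalFor G s(u, v) x v ∨ CriticalFor G s(u, v) x u)}

/-- `S_uv`: common neighbours of `u` and `v`. -/
def Suv (G : SimpleGraph V) (u v : V) : Set V :=
  {x | G.Adj u x ∧ G.Adj v x}

/-- `S_w = N(w) \ (P_uv ∪ S_uv ∪ {w'})`, where `{w, w'} = {u, v}`. -/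
def Sside (G : SimpleGraph V) (u v w w' : V) : Set V :=
  G.neighborSet w \ (Puv G u v ∪ Suv G u v ∪ {w'})

/-- The set `X = {v} ∪ S_u ∪ P_uv ∪ S_uv`. -/
def Xset (G : SimpleGraph V) (u v : V) : Set V :=
  {v} ∪ Sside G u v u v ∪ Puv G u v ∪ Suv G u v

/-- The set `Y = {u} ∪ S_v`. -/
def Yset (G : SimpleGraph V) (u v : V) : Set V :=
  {u} ∪ Sside G u v v u

/-- An edge of `G` with both endpoints in `X` or both endpoints in `Y`. -/
def InnerEdge (G : SimpleGraph V) (u v : V) (e : Sym2 V) : Prop :=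
  e ∈ G.edgeSet ∧ ((∀ a ∈ e, a ∈ Xset G u v) ∨ (∀ a ∈ e, a ∈ Yset G u v))

/-- An edge-assignment for `(G, uv)`: an injective map sending each edge `e` inside `X`
or inside `Y` to a non-adjacent pair `{b,c}` with one vertex in `X` and one in `Y`,
where `b` is an endpoint of `e`, `c` lies in the part not containing `e`, and `e` is
critical for `{b,c}`. -/
def IsEdgeAssignment (G : SimpleGraph V) (u v : V) (f : Sym2 V → Sym2 V) : Prop :=
  Set.InjOn f {e | InnerEdge G u v e} ∧
    ∀ e, InnerEdge G u v e →
      ∃ b c, b ∈ e ∧ ¬ G.Adj b c ∧ f e = s(b, c) ∧ CriticalFor G e b c ∧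
        ((∀ a ∈ e, a ∈ Xset G u v) → b ∈ Xset G u v ∧ c ∈ Yset G u v) ∧
        ((∀ a ∈ e, a ∈ Yset G u v) → b ∈ Yset G u v ∧ c ∈ Xset G u v)

/-- The set of `f`-free pairs: non-adjacent pairs `{b,c}` with `b ∈ X`, `c ∈ Y`,
not in the image of `f`. -/
def freeSet (G : SimpleGraph V) (u v : V) (f : Sym2 V → Sym2 V) : Set (Sym2 V) :=
  {p | (∃ b c, b ∈ Xset G u v ∧ c ∈ Yset G u v ∧ ¬ G.Adj b c ∧ p = s(b, c)) ∧
    ∀ e, InnerEdge G u v e → f e ≠ p}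

/-- The `f`-orientation: an edge `ab` inside `S_u` or inside `S_v` is oriented from `a`
to `b` whenever `f(ab) = {b,c}`, i.e. `b` belongs to the image pair and `a` does not. -/
def FOrient (G : SimpleGraph V) (u v : V) (f : Sym2 V → Sym2 V) (a b : V) : Prop :=
  G.Adj a b ∧
    ((a ∈ Sside G u v u v ∧ b ∈ Sside G u v u v) ∨
      (a ∈ Sside G u v v u ∧ b ∈ Sside G u v v u)) ∧
    b ∈ f s(a, b) ∧ a ∉ f s(a, b)

/-- The graph `H₅`: vertices `u,v,p,q,r,s = 0,1,2,3,4,5`, edges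
`uv, up, uq, us, vr, vs, pq, qr`. -/
def H5 : SimpleGraph (Fin 6) :=
  SimpleGraph.fromEdgeSet {s(0, 1), s(0, 2), s(0, 3), s(0, 5), s(1, 4), s(1, 5), s(2, 3), s(3, 4)}

/-- The vertex type of the expanded graph `T`: the vertices `u`, `v`, the vertices
`b₁, …, b_k`, the classes of twins of `a₁, …, a_k` (of sizes `m 1, …, m k`), and the
class of twins of `w` (of size `mw`, possibly zero). -/
abbrev TVert (k : ℕ) (m : Fin k → ℕ) (mw : ℕ) : Type :=
  (Unit ⊕ Unit) ⊕ (Fin k ⊕ ((Σ i : Fin k, Fin (m i)) ⊕ Fin mw))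

/-- The adjacency-generating relation: `u` is adjacent to every `aᵢⱼ`, every `bᵢ` and
every `wⱼ`; `v` is adjacent to every `bᵢ` and every `wⱼ`; and `aᵢⱼ` is adjacent to
`bᵢ`. -/
def Trel (k : ℕ) (m : Fin k → ℕ) (mw : ℕ) : TVert k m mw → TVert k m mw → Prop
  | Sum.inl (Sum.inl _), Sum.inr (Sum.inl _) => True
  | Sum.inl (Sum.inl _), Sum.inr (Sum.inr (Sum.inl _)) => True
  | Sum.inl (Sum.inl _), Sum.inr (Sum.inr (Sum.inr _)) => True
  | Sum.inl (Sum.inr _), Sum.inr (Sum.inl _) => True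
  | Sum.inl (Sum.inr _), Sum.inr (Sum.inr (Sum.inr _)) => True
  | Sum.inr (Sum.inr (Sum.inl ⟨i, _⟩)), Sum.inr (Sum.inl i') => i = i'
  | _, _ => False

/-- A member of the family `T'`: obtained from `T_{2k+2}` (when `mw = 0`) or `T_{2k+3}`
(when `mw ≥ 1`) by expanding each `aᵢ` into `m i ≥ 1` twins and `w` into `mw` twins. -/
def Tgraph (k : ℕ) (m : Fin k → ℕ) (mw : ℕ) : SimpleGraph (TVert k m mw) :=
  SimpleGraph.fromRel (Trel k m mw)

open SimpleGraph

def WithinTwo (G : SimpleGraph V) (x y : V) : Prop :=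
  ∃ w : G.Walk x y, w.length ≤ 2

namespace WithinTwo

variable {G : SimpleGraph V} {x y z : V}

theorem refl (x : V) : WithinTwo G x x := ⟨.nil, by simp⟩

theorem of_adj (h : G.Adj x y) : WithinTwo G x y := ⟨h.toWalk, by simp⟩

theorem of_adj_adj (hxz : G.Adj x z) (hzy : G.Adj z y) : WithinTwo G x y :=
  ⟨.cons hxz (.cons hzy .nil), by simp⟩

theorem symm (h : WithinTwo G x y) : WithinTwo G y x :=
  let ⟨w, hw⟩ := h
  ⟨w.reverse, by simpa using hw⟩

theorem of_eq_or_adj (hx : x = z ∨ G.Adj z x) (hy : y = z ∨ G.Adj z y) : WithinTwo G x y := by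
  rcases hx with rfl | hx <;> rcases hy with rfl | hy
  exacts [refl _, of_adj hy, of_adj hx.symm, of_adj_adj hx.symm hy]

theorem map {W : Type*} {H : SimpleGraph W} (f : G →g H) (h : WithinTwo G x y) :
    WithinTwo H (f x) (f y) :=
  let ⟨w, hw⟩ := h
  ⟨w.map f, by simpa using hw⟩

end WithinTwo

theorem DiamAtMostTwo.of_iso {W : Type*} {G : SimpleGraph V} {H : SimpleGraph W} (φ : G ≃g H)
    (h : DiamAtMostTwo H) : DiamAtMostTwo G := fun x y => show WithinTwo G x y by
  simpa using WithinTwo.map φ.symm.toHom (h (φ x) (φ y))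

theorem SimpleGraph.Iso.ncard_edgeSet_eq {W : Type*} {G : SimpleGraph V} {H : SimpleGraph W}
    (φ : G ≃g H) : G.edgeSet.ncard = H.edgeSet.ncard := by
  rw [← Nat.card_coe_set_eq, ← Nat.card_coe_set_eq]
  exact Nat.card_congr φ.mapEdgeSet

theorem not_withinTwo_deleteEdges_iff {G : SimpleGraph V} {e : Sym2 V} {x y : V} :
    ¬ WithinTwo (G.deleteEdges {e}) x y ↔ ∀ w : G.Walk x y, w.length ≤ 2 → e ∈ w.edges := by
  refine ⟨fun h w hw => by_contra fun he => h ⟨w.toDeleteEdge e he, by simpa using hw⟩, ?_⟩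
  rintro h ⟨w, hw⟩
  have hsub : ∀ d ∈ w.edges, d ∈ G.edgeSet := fun d hd =>
    (edgeSet_deleteEdges {e} ▸ w.edges_subset_edgeSet hd).1
  have he := h (w.transfer G hsub) (by simpa using hw)
  rw [Walk.edges_transfer] at he
  simpa using w.edges_subset_edgeSet he

theorem criticalFor_iff {G : SimpleGraph V} {e : Sym2 V} {x y : V} :
    CriticalFor G e x y ↔ x ≠ y ∧ WithinTwo G x y ∧ ¬ WithinTwo (G.deleteEdges {e}) x y := by
  rw [not_withinTwo_deleteEdges_iff]; rfl

theorem isD2C_iff_criticalFor {G : SimpleGraph V} :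
    IsD2C G ↔ DiamAtMostTwo G ∧ (∃ x y, x ≠ y ∧ ¬ G.Adj x y) ∧
      ∀ e ∈ G.edgeSet, ∃ x y, CriticalFor G e x y := by
  refine and_congr_right fun hd => and_congr_right fun _ => forall₂_congr fun e _ => ?_
  simp only [criticalFor_iff]
  constructor
  · intro h
    obtain ⟨x, y, hxy⟩ : ∃ x y, ¬ WithinTwo (G.deleteEdges {e}) x y := by
      simpa [DiamAtMostTwo, WithinTwo] using h
    exact ⟨x, y, fun hxy' => hxy (hxy' ▸ .refl x), hd x y, hxy⟩
  · rintro ⟨x, y, -, -, hxy⟩ h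
    exact hxy (h x y)

theorem CriticalFor.of_iso {W : Type*} {G : SimpleGraph V} {H : SimpleGraph W} (φ : G ≃g H)
    {e : Sym2 V} {x y : V} (h : CriticalFor H (e.map φ) (φ x) (φ y)) : CriticalFor G e x y := by
  obtain ⟨hne, hw, hcrit⟩ := h
  refine ⟨fun hxy => hne (congrArg φ hxy), ?_, fun w hw => ?_⟩
  · show WithinTwo G x y
    simpa using WithinTwo.map φ.symm.toHom hw
  have := hcrit (w.map φ.toHom) (by simpa using hw)
  rw [Walk.edges_map, List.mem_map] at this
  obtain ⟨d, hd, hde⟩ := this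
  rwa [← Sym2.map.injective φ.injective hde]

theorem IsD2C.of_iso {W : Type*} {G : SimpleGraph V} {H : SimpleGraph W} (φ : G ≃g H)
    (h : IsD2C H) : IsD2C G := by
  obtain ⟨hd, ⟨x, y, hxy, hadj⟩, hcrit⟩ := isD2C_iff_criticalFor.1 h
  refine isD2C_iff_criticalFor.2
    ⟨hd.of_iso φ, ⟨φ.symm x, φ.symm y, by simpa using hxy, by rwa [φ.symm.map_adj_iff]⟩,
      fun e he => ?_⟩
  obtain ⟨x, y, hc⟩ := hcrit (e.map φ) (φ.map_mem_edgeSet_iff.2 he)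
  refine ⟨φ.symm x, φ.symm y, CriticalFor.of_iso φ ?_⟩
  simpa using hc

theorem criticalFor_of_forall_adj {G : SimpleGraph V} {e : Sym2 V} {x y : V} (hxy : x ≠ y)
    (hw : WithinTwo G x y) (hdirect : G.Adj x y → e = s(x, y))
    (hmiddle : ∀ z, G.Adj x z → G.Adj z y → e = s(x, z) ∨ e = s(z, y)) :
    CriticalFor G e x y := by
  refine ⟨hxy, hw, fun w hw => ?_⟩
  match w, hw with
  | .nil, _ => exact absurd rfl hxy
  | .cons h .nil, _ => simp [hdirect h]
  | .cons h (.cons h' .nil), _ => rcases hmiddle _ h h' with he | he <;> simp [he]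

theorem criticalFor_of_unique_commonNeighbor {G : SimpleGraph V} {x y z : V} (hxy : x ≠ y)
    (hnadj : ¬ G.Adj x y) (hxz : G.Adj x z) (hzy : G.Adj z y)
    (huniq : ∀ z', G.Adj x z' → G.Adj z' y → z' = z) :
    CriticalFor G s(x, z) x y ∧ CriticalFor G s(z, y) x y :=
  ⟨criticalFor_of_forall_adj hxy (.of_adj_adj hxz hzy) (absurd · hnadj)
      fun z' hxz' hz'y => .inl (huniq z' hxz' hz'y ▸ rfl),
    criticalFor_of_forall_adj hxy (.of_adj_adj hxz hzy) (absurd · hnadj)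
      fun z' hxz' hz'y => .inr (huniq z' hxz' hz'y ▸ rfl)⟩

theorem criticalFor_of_adj_of_forall_not_adj {G : SimpleGraph V} {x y : V} (hxy : G.Adj x y)
    (hno : ∀ z, G.Adj x z → ¬ G.Adj z y) : CriticalFor G s(x, y) x y :=
  criticalFor_of_forall_adj hxy.ne (.of_adj hxy) (fun _ => rfl) fun z hxz hzy =>
    absurd hzy (hno z hxz)

namespace Tgraph

variable {k : ℕ} {m : Fin k → ℕ} {mw : ℕ}

abbrev Rest (k : ℕ) (m : Fin k → ℕ) (mw : ℕ) : Type := Fin k ⊕ ((Σ i : Fin k, Fin (m i)) ⊕ Fin mw)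

abbrev u : TVert k m mw := .inl (.inl ())
abbrev v : TVert k m mw := .inl (.inr ())
abbrev b (i : Fin k) : TVert k m mw := .inr (.inl i)
abbrev a (i : Fin k) (j : Fin (m i)) : TVert k m mw := .inr (.inr (.inl ⟨i, j⟩))
abbrev w (j : Fin mw) : TVert k m mw := .inr (.inr (.inr j))

theorem adj_iff (x y : TVert k m mw) :
    (Tgraph k m mw).Adj x y ↔ x ≠ y ∧ (Trel k m mw x y ∨ Trel k m mw y x) :=
  fromRel_adj _ _ _

def partner : Rest k m mw → TVert k m mw
  | .inl _ => v
  | .inr (.inl ⟨i, _⟩) => b i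
  | .inr (.inr _) => v

def edge : Rest k m mw ⊕ Rest k m mw → Sym2 (TVert k m mw) :=
  Sum.elim (fun t => s(u, .inr t)) (fun t => s(.inr t, partner t))

theorem edge_injective : Function.Injective (edge (k := k) (m := m) (mw := mw)) := by
  refine Function.Injective.sumElim (fun t t' h => by simpa using h) (fun t t' h => ?_)
    (fun t t' => ?_)
  · rcases t with i | ⟨i, j⟩ | j <;> rcases t' with i' | ⟨i', j'⟩ | j' <;> simp_all [partner]
  · rcases t' with i' | ⟨i', j'⟩ | j' <;> simp [partner]

theorem edgeSet_eq_range : (Tgraph k m mw).edgeSet = Set.range edge := by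
  refine Set.Subset.antisymm (fun e he => ?_) ?_
  · induction e using Sym2.ind with
    | _ x y =>
    rcases x with (⟨⟩ | ⟨⟩) | (i | ⟨i, j⟩ | j) <;>
      rcases y with (⟨⟩ | ⟨⟩) | (i' | ⟨i', j'⟩ | j') <;> simp [adj_iff, Trel] at he
    all_goals
      try subst he
      first
        | exact ⟨.inl _, rfl⟩ | exact ⟨.inr _, rfl⟩
        | (rw [Sym2.eq_swap]; first | exact ⟨.inl _, rfl⟩ | exact ⟨.inr _, rfl⟩)
  · rintro _ ⟨(t | t), rfl⟩ <;> rcases t with i | ⟨i, j⟩ | j <;>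
      simp [edge, partner, adj_iff, Trel]

theorem ncard_edgeSet : (Tgraph k m mw).edgeSet.ncard = 2 * Fintype.card (TVert k m mw) - 4 := by
  rw [edgeSet_eq_range, Set.ncard_range_of_injective edge_injective, Nat.card_eq_fintype_card]
  simp only [Fintype.card_sum, Fintype.card_unit]
  omega

theorem eq_u_or_adj_u {x : TVert k m mw} (hx : x ≠ v) : x = u ∨ (Tgraph k m mw).Adj u x := by
  rcases x with (⟨⟩ | ⟨⟩) | (i | ⟨i, j⟩ | j) <;> simp_all [adj_iff, Trel]

theorem withinTwo_v (hk : 0 < k) (y : TVert k m mw) : WithinTwo (Tgraph k m mw) v y := by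
  rcases y with (⟨⟩ | ⟨⟩) | (i | ⟨i, j⟩ | j)
  · exact .of_adj_adj (z := b ⟨0, hk⟩) (by simp [adj_iff, Trel]) (by simp [adj_iff, Trel])
  · exact .refl _
  · exact .of_adj (by simp [adj_iff, Trel])
  · exact .of_adj_adj (z := b i) (by simp [adj_iff, Trel]) (by simp [adj_iff, Trel])
  · exact .of_adj (by simp [adj_iff, Trel])

theorem diamAtMostTwo (hk : 0 < k) : DiamAtMostTwo (Tgraph k m mw) := by
  intro x y
  by_cases hx : x = v
  · exact hx ▸ withinTwo_v hk y
  by_cases hy : y = v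
  · exact hy ▸ (withinTwo_v hk x).symm
  exact WithinTwo.of_eq_or_adj (eq_u_or_adj_u hx) (eq_u_or_adj_u hy)

theorem adj_a_iff (i : Fin k) (j : Fin (m i)) (x : TVert k m mw) :
    (Tgraph k m mw).Adj (a i j) x ↔ x = u ∨ x = b i := by
  rcases x with (⟨⟩ | ⟨⟩) | (i' | ⟨i', j'⟩ | j') <;> simp [adj_iff, Trel, eq_comm]

theorem adj_w_iff (j : Fin mw) (x : TVert k m mw) :
    (Tgraph k m mw).Adj (w j) x ↔ x = u ∨ x = v := by
  rcases x with (⟨⟩ | ⟨⟩) | (i' | ⟨i', j'⟩ | j') <;> simp [adj_iff, Trel]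

theorem exists_criticalFor_u (hk : 2 ≤ k) (hm : ∀ i, 1 ≤ m i) (t : Rest k m mw) :
    ∃ x y, CriticalFor (Tgraph k m mw) s(u, .inr t) x y := by
  have : Nontrivial (Fin k) := Fin.nontrivial_iff_two_le.2 hk
  rcases t with i | ⟨i, j⟩ | j
  · obtain ⟨i', hi'⟩ := exists_ne i
    refine ⟨a i' ⟨0, hm i'⟩, b i, (criticalFor_of_unique_commonNeighbor (z := u) ?_ ?_ ?_ ?_ ?_).2⟩
    · simp
    · simp [adj_a_iff, hi'.symm]
    · simp [adj_iff, Trel]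
    · simp [adj_iff, Trel]
    · simp only [adj_a_iff]
      rintro z (rfl | rfl) h
      · rfl
      · simp [adj_iff, Trel] at h
  · obtain ⟨i', hi'⟩ := exists_ne i
    refine ⟨a i j, b i',
      Sym2.eq_swap ▸ (criticalFor_of_unique_commonNeighbor (z := u) ?_ ?_ ?_ ?_ ?_).1⟩
    · simp
    · simp [adj_a_iff, hi']
    · simp [adj_iff, Trel]
    · simp [adj_iff, Trel]
    · simp only [adj_a_iff]
      rintro z (rfl | rfl) h
      · rfl
      · simp [adj_iff, Trel] at h
  · refine ⟨w j, a ⟨0, by omega⟩ ⟨0, hm _⟩,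
      Sym2.eq_swap ▸ (criticalFor_of_unique_commonNeighbor (z := u) ?_ ?_ ?_ ?_ ?_).1⟩
    · simp
    · simp [adj_w_iff]
    · simp [adj_iff, Trel]
    · simp [adj_iff, Trel]
    · simp only [adj_w_iff]
      rintro z (rfl | rfl) h
      · rfl
      · simp [adj_iff, Trel] at h

theorem exists_criticalFor_partner (hm : ∀ i, 1 ≤ m i) (t : Rest k m mw) :
    ∃ x y, CriticalFor (Tgraph k m mw) s(.inr t, partner t) x y := by
  rcases t with i | ⟨i, j⟩ | j <;> dsimp only [partner]
  · refine ⟨a i ⟨0, hm i⟩, v, (criticalFor_of_unique_commonNeighbor (z := b i) ?_ ?_ ?_ ?_ ?_).2⟩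
    · simp
    · simp [adj_a_iff]
    · simp [adj_iff, Trel]
    · simp [adj_iff, Trel]
    · simp only [adj_a_iff]
      rintro z (rfl | rfl) h
      · simp [adj_iff, Trel] at h
      · rfl
  · refine ⟨a i j, v, (criticalFor_of_unique_commonNeighbor (z := b i) ?_ ?_ ?_ ?_ ?_).1⟩
    · simp
    · simp [adj_a_iff]
    · simp [adj_iff, Trel]
    · simp [adj_iff, Trel]
    · simp only [adj_a_iff]
      rintro z (rfl | rfl) h
      · simp [adj_iff, Trel] at h
      · rfl
  · refine ⟨w j, v, criticalFor_of_adj_of_forall_not_adj ?_ ?_⟩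
    · simp [adj_iff, Trel]
    · simp only [adj_w_iff]
      rintro z (rfl | rfl) h
      · simp [adj_iff, Trel] at h
      · simp at h

theorem exists_criticalFor (hk : 2 ≤ k) (hm : ∀ i, 1 ≤ m i) :
    ∀ e ∈ (Tgraph k m mw).edgeSet, ∃ x y, CriticalFor (Tgraph k m mw) e x y := by
  rw [edgeSet_eq_range]
  rintro _ ⟨t | t, rfl⟩
  exacts [exists_criticalFor_u hk hm t, exists_criticalFor_partner hm t]

theorem isD2C (hk : 2 ≤ k) (hm : ∀ i, 1 ≤ m i) : IsD2C (Tgraph k m mw) :=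
  isD2C_iff_criticalFor.2 ⟨diamAtMostTwo (by omega), ⟨u, v, by simp, by simp [adj_iff, Trel]⟩,
    exists_criticalFor hk hm⟩

end Tgraph

/-- every graph in the family `T'` of order `n` is diameter-2-critical and
has exactly `2n − 4` edges. -/
theorem statement18 {V : Type*} [Fintype V] (G : SimpleGraph V)
    (k : ℕ) (hk : 2 ≤ k) (m : Fin k → ℕ) (hm : ∀ i, 1 ≤ m i) (mw : ℕ)
    (hiso : Nonempty (G ≃g Tgraph k m mw)) :
    IsD2C G ∧ G.edgeSet.ncard = 2 * Fintype.card V - 4 := by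
  obtain ⟨φ⟩ := hiso
  refine ⟨(Tgraph.isD2C hk hm).of_iso φ, ?_⟩
  rw [φ.ncard_edgeSet_eq, Fintype.card_congr φ.toEquiv, Tgraph.ncard_edgeSet]
end

section
/- Every non-bipartite diameter-2-critical graph on n vertices with maximum degree n − 2 belongs to the family T'. -/
variable {V : Type*}

lemma st19_walk2 {V : Type*} {G : SimpleGraph V} {x y : V} (w : G.Walk x y) (h : w.length ≤ 2) :
    x = y ∨ G.Adj x y ∨ ∃ z, G.Adj x z ∧ G.Adj z y := by
  cases w with
  | nil => exact Or.inl rfl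
  | cons h1 w2 =>
    cases w2 with
    | nil => exact Or.inr (Or.inl h1)
    | cons h2 w3 =>
      cases w3 with
      | nil => exact Or.inr (Or.inr ⟨_, h1, h2⟩)
      | cons h3 w4 => simp [SimpleGraph.Walk.length_cons] at h

lemma st19_diam2_intro {V : Type*} {G : SimpleGraph V}
    (h : ∀ x y : V, x = y ∨ G.Adj x y ∨ ∃ z, G.Adj x z ∧ G.Adj z y) : DiamAtMostTwo G := by
  intro x y
  rcases h x y with rfl | h | ⟨z, h1, h2⟩
  · exact ⟨SimpleGraph.Walk.nil, by simp⟩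
  · exact ⟨SimpleGraph.Walk.cons h SimpleGraph.Walk.nil, by simp⟩
  · exact ⟨SimpleGraph.Walk.cons h1 (SimpleGraph.Walk.cons h2 SimpleGraph.Walk.nil), by simp⟩

lemma st19_safe {V : Type*} {G : SimpleGraph V} {p q x y : V} (hxy : G.Adj x y)
    (hne : (x ≠ p ∧ x ≠ q) ∨ (y ≠ p ∧ y ≠ q)) :
    (G.deleteEdges {s(p, q)}).Adj x y := by
  rw [SimpleGraph.deleteEdges_adj]
  refine ⟨hxy, ?_⟩
  simp only [Set.mem_singleton_iff, Sym2.eq_iff]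
  rintro (⟨rfl, rfl⟩ | ⟨rfl, rfl⟩) <;> tauto

/-- Auxiliary assembling map for `statement19`. -/
def st19theta {V : Type*} (u v : V) {k : ℕ} {m : Fin k → ℕ} {mw : ℕ}
    (bOf : Fin k → V) (aOf : ∀ i : Fin k, Fin (m i) → V) (wOf : Fin mw → V) :
    TVert k m mw → V
  | Sum.inl (Sum.inl _) => u
  | Sum.inl (Sum.inr _) => v
  | Sum.inr (Sum.inl i) => bOf i
  | Sum.inr (Sum.inr (Sum.inl ⟨i, j⟩)) => aOf i j
  | Sum.inr (Sum.inr (Sum.inr j)) => wOf j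
/-- every non-bipartite D2C graph on `n` vertices with maximum degree
`n − 2` belongs to the family `T'`. -/
theorem statement19 {V : Type*} [Fintype V] (G : SimpleGraph V) [DecidableRel G.Adj]
    (hG : IsD2C G) (hnb : ¬ G.Colorable 2)
    (hdeg : G.maxDegree = Fintype.card V - 2) :
    ∃ k : ℕ, 2 ≤ k ∧ ∃ m : Fin k → ℕ, (∀ i, 1 ≤ m i) ∧ ∃ mw : ℕ,
      Nonempty (G ≃g Tgraph k m mw) := by
  classical
  obtain ⟨hdiam, ⟨x0, y0, hxy0, hnxy0⟩, hcrit⟩ := hG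
  have hne : Nonempty V := ⟨x0⟩
  obtain ⟨u, hu⟩ := G.exists_maximal_degree_vertex
  have hcard : 2 ≤ Fintype.card V := Fintype.one_lt_card_iff_nontrivial.mpr ⟨x0, y0, hxy0⟩
  have hdegu : G.degree u = Fintype.card V - 2 := by rw [← hu, hdeg]
  have hnsub : G.neighborFinset u ⊆ Finset.univ.erase u := by
    intro x hx
    exact Finset.mem_erase.mpr ⟨((SimpleGraph.mem_neighborFinset _ _ _).mp hx).ne',
      Finset.mem_univ x⟩
  have hscard : (Finset.univ.erase u \ G.neighborFinset u).card = 1 := by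
    rw [Finset.card_sdiff_of_subset hnsub, Finset.card_erase_of_mem (Finset.mem_univ u),
      Finset.card_univ]
    have : (G.neighborFinset u).card = G.degree u := rfl
    rw [this, hdegu]
    omega
  obtain ⟨v, hv⟩ := Finset.card_eq_one.mp hscard
  have hvmem : v ∈ Finset.univ.erase u \ G.neighborFinset u := by
    rw [hv]; exact Finset.mem_singleton_self v
  have hvu : v ≠ u := (Finset.mem_erase.mp (Finset.mem_sdiff.mp hvmem).1).1
  have hnadjuv : ¬ G.Adj u v := fun h =>
    (Finset.mem_sdiff.mp hvmem).2 ((SimpleGraph.mem_neighborFinset _ _ _).mpr h)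
  have hadj_u : ∀ x, x ≠ u → x ≠ v → G.Adj u x := by
    intro x hxu hxv
    by_contra h
    have hx : x ∈ Finset.univ.erase u \ G.neighborFinset u :=
      Finset.mem_sdiff.mpr ⟨Finset.mem_erase.mpr ⟨hxu, Finset.mem_univ _⟩,
        fun hc => h ((SimpleGraph.mem_neighborFinset _ _ _).mp hc)⟩
    rw [hv] at hx
    exact hxv (Finset.mem_singleton.mp hx)
  set Bs := G.neighborFinset v with hBsdef
  have hBv : ∀ b ∈ Bs, G.Adj v b := fun b hb => (SimpleGraph.mem_neighborFinset _ _ _).mp hb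
  have hBnu : ∀ b ∈ Bs, b ≠ u := by
    rintro b hb rfl
    exact hnadjuv (hBv _ hb).symm
  have hBnv : ∀ b ∈ Bs, b ≠ v := fun b hb => (hBv b hb).ne'
  have hBu : ∀ b ∈ Bs, G.Adj u b := fun b hb => hadj_u b (hBnu b hb) (hBnv b hb)
  set As := Finset.univ \ (Bs ∪ {u, v}) with hAsdef
  have hAmem : ∀ a ∈ As, a ≠ u ∧ a ≠ v ∧ a ∉ Bs := by
    intro a ha
    rw [hAsdef, Finset.mem_sdiff, Finset.mem_union, Finset.mem_insert,
      Finset.mem_singleton] at ha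
    tauto
  have hAnadjv : ∀ a ∈ As, ¬ G.Adj v a := fun a ha h =>
    (hAmem a ha).2.2 ((SimpleGraph.mem_neighborFinset _ _ _).mpr h)
  have hAu : ∀ a ∈ As, G.Adj u a := fun a ha => hadj_u a (hAmem a ha).1 (hAmem a ha).2.1
  have hpart : ∀ x : V, x = u ∨ x = v ∨ x ∈ Bs ∨ x ∈ As := by
    intro x
    by_cases h1 : x = u
    · exact Or.inl h1
    by_cases h2 : x = v
    · exact Or.inr (Or.inl h2)
    by_cases h3 : x ∈ Bs
    · exact Or.inr (Or.inr (Or.inl h3))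
    refine Or.inr (Or.inr (Or.inr ?_))
    rw [hAsdef, Finset.mem_sdiff, Finset.mem_union, Finset.mem_insert, Finset.mem_singleton]
    exact ⟨Finset.mem_univ x, by tauto⟩
  have hBne : Bs.Nonempty := by
    obtain ⟨w, hw⟩ := hdiam u v
    rcases st19_walk2 w hw with h | h | ⟨z, h1, h2⟩
    · exact absurd h.symm hvu
    · exact absurd h hnadjuv
    · exact ⟨z, (SimpleGraph.mem_neighborFinset _ _ _).mpr h2.symm⟩
  have hAB : ∀ a ∈ As, ∃ b ∈ Bs, G.Adj a b := by
    intro a ha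
    obtain ⟨w, hw⟩ := hdiam a v
    rcases st19_walk2 w hw with h | h | ⟨z, h1, h2⟩
    · exact absurd h (hAmem a ha).2.1
    · exact absurd h.symm (hAnadjv a ha)
    · exact ⟨z, (SimpleGraph.mem_neighborFinset _ _ _).mpr h2.symm, h1⟩
  have rebuild : ∀ p q : V, G.Adj p q → p ≠ u → p ≠ v → q ≠ u → q ≠ v →
      (∀ x ∈ As, ∃ b ∈ Bs, G.Adj x b ∧ ((x ≠ p ∧ x ≠ q) ∨ (b ≠ p ∧ b ≠ q))) → False := by
    intro p q hpq hpu hpv hqu hqv hAside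
    apply hcrit s(p, q) (G.mem_edgeSet.mpr hpq)
    apply st19_diam2_intro
    have hu' : ∀ z, z ≠ u → z ≠ v → (G.deleteEdges {s(p, q)}).Adj u z := fun z h1 h2 =>
      st19_safe (hadj_u z h1 h2) (Or.inl ⟨Ne.symm hpu, Ne.symm hqu⟩)
    have hv' : ∀ b ∈ Bs, (G.deleteEdges {s(p, q)}).Adj v b := fun b hb =>
      st19_safe (hBv b hb) (Or.inl ⟨Ne.symm hpv, Ne.symm hqv⟩)
    have reachv : ∀ z, z ≠ v → (G.deleteEdges {s(p, q)}).Adj v z ∨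
        ∃ t, (G.deleteEdges {s(p, q)}).Adj v t ∧ (G.deleteEdges {s(p, q)}).Adj t z := by
      intro z hz
      rcases hpart z with rfl | rfl | hzB | hzA
      · obtain ⟨b, hb⟩ := hBne
        exact Or.inr ⟨b, hv' b hb, st19_safe (hBu b hb).symm (Or.inr ⟨Ne.symm hpu, Ne.symm hqu⟩)⟩
      · exact absurd rfl hz
      · exact Or.inl (hv' z hzB)
      · obtain ⟨b, hb, hba, hsafe⟩ := hAside z hzA
        exact Or.inr ⟨b, hv' b hb, st19_safe hba.symm (by tauto)⟩
    intro x y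
    by_cases hxy : x = y
    · exact Or.inl hxy
    right
    rcases eq_or_ne x v with rfl | hxv
    · rcases reachv y (Ne.symm hxy) with h | ⟨t, h1, h2⟩
      · exact Or.inl h
      · exact Or.inr ⟨t, h1, h2⟩
    rcases eq_or_ne y v with rfl | hyv
    · rcases reachv x hxv with h | ⟨t, h1, h2⟩
      · exact Or.inl h.symm
      · exact Or.inr ⟨t, h2.symm, h1.symm⟩
    rcases eq_or_ne x u with rfl | hxu
    · exact Or.inl (hu' y (Ne.symm hxy) hyv)
    rcases eq_or_ne y u with rfl | hyu
    · exact Or.inl (hu' x hxu hxv).symm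
    · exact Or.inr ⟨u, (hu' x hxu hxv).symm, hu' y hyu hyv⟩
  have hAindep : ∀ a ∈ As, ∀ a' ∈ As, ¬ G.Adj a a' := by
    intro a ha a' ha' h
    refine rebuild a a' h (hAmem a ha).1 (hAmem a ha).2.1 (hAmem a' ha').1 (hAmem a' ha').2.1 ?_
    intro x hx
    obtain ⟨b, hb, hab⟩ := hAB x hx
    refine ⟨b, hb, hab, Or.inr ⟨?_, ?_⟩⟩
    · exact fun e => (hAmem a ha).2.2 (e ▸ hb)
    · exact fun e => (hAmem a' ha').2.2 (e ▸ hb)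
  have hBindep : ∀ b ∈ Bs, ∀ b' ∈ Bs, ¬ G.Adj b b' := by
    intro b hb b' hb' h
    refine rebuild b b' h (hBnu b hb) (hBnv b hb) (hBnu b' hb') (hBnv b' hb') ?_
    intro x hx
    obtain ⟨c, hc, hxc⟩ := hAB x hx
    refine ⟨c, hc, hxc, Or.inl ⟨?_, ?_⟩⟩
    · exact fun e => (hAmem x hx).2.2 (e ▸ hb)
    · exact fun e => (hAmem x hx).2.2 (e ▸ hb')
  have hAuniq : ∀ a ∈ As, ∀ b b', b ∈ Bs → b' ∈ Bs → G.Adj a b → G.Adj a b' → b = b' := by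
    intro a ha b b' hb hb' h h'
    by_contra hbb
    refine rebuild a b h (hAmem a ha).1 (hAmem a ha).2.1 (hBnu b hb) (hBnv b hb) ?_
    intro x hx
    rcases eq_or_ne x a with rfl | hxa
    · exact ⟨b', hb', h', Or.inr ⟨fun e => (hAmem x hx).2.2 (e ▸ hb'), fun e => hbb (e.symm ▸ rfl)⟩⟩
    · obtain ⟨c, hc, hxc⟩ := hAB x hx
      exact ⟨c, hc, hxc, Or.inl ⟨hxa, fun e => (hAmem x hx).2.2 (e ▸ hb)⟩⟩
  set Ks := Bs.filter (fun b => ∃ a ∈ As, G.Adj a b) with hKsdef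
  have hKsub : Ks ⊆ Bs := Finset.filter_subset _ _
  have hAKs : ∀ a ∈ As, ∀ b ∈ Bs, G.Adj a b → b ∈ Ks := fun a ha b hb hab =>
    Finset.mem_filter.mpr ⟨hb, a, ha, hab⟩
  set Ws := Bs \ Ks with hWsdef
  have hWsub : Ws ⊆ Bs := Finset.sdiff_subset
  have hWnK : ∀ w ∈ Ws, w ∉ Ks := fun w hw => (Finset.mem_sdiff.mp hw).2
  have hk2 : 2 ≤ Ks.card := by
    by_contra hlt
    push_neg at hlt
    interval_cases h : Ks.card
    · -- Ks empty: As empty, graph bipartite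
      have hKe : Ks = ∅ := Finset.card_eq_zero.mp h
      have hAe : ∀ a : V, a ∉ As := by
        intro a ha
        obtain ⟨b, hb, hab⟩ := hAB a ha
        have := hAKs a ha b hb hab
        rw [hKe] at this
        exact absurd this (Finset.notMem_empty b)
      have huB : u ∉ Bs := fun hc => hnadjuv ((hBv u hc).symm)
      have hvB : v ∉ Bs := fun hc => (hBnv v hc) rfl
      refine hnb ⟨SimpleGraph.Coloring.mk (fun x => if x ∈ Bs then (1 : Fin 2) else 0) ?_⟩
      intro x y hxy
      rcases hpart x with rfl | rfl | hxB | hxA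
      · rcases hpart y with rfl | rfl | hyB | hyA
        · exact absurd hxy (G.irrefl)
        · exact absurd hxy hnadjuv
        · simp [hyB, huB]
        · exact absurd hyA (hAe y)
      · rcases hpart y with rfl | rfl | hyB | hyA
        · exact absurd hxy.symm hnadjuv
        · exact absurd hxy (G.irrefl)
        · simp [hyB, hvB]
        · exact absurd hyA (hAe y)
      · rcases hpart y with rfl | rfl | hyB | hyA
        · simp [hxB, huB]
        · simp [hxB, hvB]
        · exact absurd hxy (hBindep x hxB y hyB)
        · exact absurd hyA (hAe y)
      · exact absurd hxA (hAe x)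
    · -- Ks = {b0}
      obtain ⟨b0, hKs1⟩ := Finset.card_eq_one.mp h
      have hb0K : b0 ∈ Ks := hKs1 ▸ Finset.mem_singleton_self b0
      have hb0B : b0 ∈ Bs := hKsub hb0K
      obtain ⟨-, a0, ha0, ha0b0⟩ := Finset.mem_filter.mp hb0K
      have hallb0 : ∀ a ∈ As, G.Adj a b0 := by
        intro a ha
        obtain ⟨b, hb, hab⟩ := hAB a ha
        have hbK := hAKs a ha b hb hab
        rw [hKs1, Finset.mem_singleton] at hbK
        exact hbK ▸ hab
      have hb0u : b0 ≠ u := hBnu b0 hb0B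
      have hb0v : b0 ≠ v := hBnv b0 hb0B
      have ha0u : a0 ≠ u := (hAmem a0 ha0).1
      have ha0v : a0 ≠ v := (hAmem a0 ha0).2.1
      have ha0b0' : a0 ≠ b0 := fun e => (hAmem a0 ha0).2.2 (e ▸ hb0B)
      rcases Finset.eq_empty_or_nonempty Ws with hWe | ⟨w0, hw0⟩
      · -- Bs = {b0}: delete edge u a0, then b0 dominates
        have hBs1 : ∀ b ∈ Bs, b = b0 := by
          intro b hb
          have : b ∈ Ks := by
            by_contra hc
            have : b ∈ Ws := Finset.mem_sdiff.mpr ⟨hb, hc⟩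
            rw [hWe] at this
            exact absurd this (Finset.notMem_empty b)
          rw [hKs1, Finset.mem_singleton] at this
          exact this
        apply hcrit s(u, a0) (G.mem_edgeSet.mpr (hAu a0 ha0))
        apply st19_diam2_intro
        have hdom : ∀ z, z ≠ b0 → (G.deleteEdges {s(u, a0)}).Adj b0 z := by
          intro z hz
          have safe : ∀ {c : V}, G.Adj b0 c → (G.deleteEdges {s(u, a0)}).Adj b0 c :=
            fun hc => st19_safe hc (Or.inl ⟨hb0u, fun e => ha0b0' e.symm⟩)
          rcases hpart z with rfl | rfl | hzB | hzA
          · exact safe (hBu b0 hb0B).symm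
          · exact safe (hBv b0 hb0B).symm
          · exact absurd (hBs1 z hzB) hz
          · exact safe (hallb0 z hzA).symm
        intro x y
        by_cases hxy : x = y
        · exact Or.inl hxy
        right
        rcases eq_or_ne x b0 with rfl | hxb0
        · exact Or.inl (hdom y (Ne.symm hxy))
        rcases eq_or_ne y b0 with rfl | hyb0
        · exact Or.inl (hdom x hxb0).symm
        · exact Or.inr ⟨b0, (hdom x hxb0).symm, hdom y hyb0⟩
      · -- Ws nonempty: delete edge u b0
        have hw0B : w0 ∈ Bs := hWsub hw0
        have hw0b0 : w0 ≠ b0 := fun e => hWnK w0 hw0 (e ▸ hb0K)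
        apply hcrit s(u, b0) (G.mem_edgeSet.mpr (hBu b0 hb0B))
        apply st19_diam2_intro
        have hu' : ∀ z, z ≠ u → z ≠ v → z ≠ b0 → (G.deleteEdges {s(u, b0)}).Adj u z :=
          fun z h1 h2 h3 => st19_safe (hadj_u z h1 h2) (Or.inr ⟨h1, h3⟩)
        have hv' : ∀ b ∈ Bs, (G.deleteEdges {s(u, b0)}).Adj v b := fun b hb =>
          st19_safe (hBv b hb) (Or.inl ⟨hvu, Ne.symm hb0v⟩)
        have hab0 : ∀ a ∈ As, (G.deleteEdges {s(u, b0)}).Adj a b0 := fun a ha =>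
          st19_safe (hallb0 a ha) (Or.inl ⟨(hAmem a ha).1, fun e => (hAmem a ha).2.2 (e ▸ hb0B)⟩)
        have huw0 : (G.deleteEdges {s(u, b0)}).Adj u w0 :=
          hu' w0 (hBnu w0 hw0B) (hBnv w0 hw0B) hw0b0
        have reachv : ∀ z, z ≠ v → (G.deleteEdges {s(u, b0)}).Adj v z ∨
            ∃ t, (G.deleteEdges {s(u, b0)}).Adj v t ∧ (G.deleteEdges {s(u, b0)}).Adj t z := by
          intro z hz
          rcases hpart z with rfl | rfl | hzB | hzA
          · exact Or.inr ⟨w0, hv' w0 hw0B, huw0.symm⟩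
          · exact absurd rfl hz
          · exact Or.inl (hv' z hzB)
          · exact Or.inr ⟨b0, hv' b0 hb0B, (hab0 z hzA).symm⟩
        have reachb0 : ∀ z, z ≠ b0 → z ≠ v → (G.deleteEdges {s(u, b0)}).Adj b0 z ∨
            ∃ t, (G.deleteEdges {s(u, b0)}).Adj b0 t ∧ (G.deleteEdges {s(u, b0)}).Adj t z := by
          intro z hz hzv
          rcases hpart z with rfl | rfl | hzB | hzA
          · exact Or.inr ⟨a0, (hab0 a0 ha0).symm, (hu' a0 ha0u ha0v ha0b0').symm⟩
          · exact absurd rfl hzv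
          · exact Or.inr ⟨v, (hv' b0 hb0B).symm, hv' z hzB⟩
          · exact Or.inl (hab0 z hzA).symm
        intro x y
        by_cases hxy : x = y
        · exact Or.inl hxy
        right
        rcases eq_or_ne x v with rfl | hxv
        · rcases reachv y (Ne.symm hxy) with hh | ⟨t, h1, h2⟩
          · exact Or.inl hh
          · exact Or.inr ⟨t, h1, h2⟩
        rcases eq_or_ne y v with rfl | hyv
        · rcases reachv x hxv with hh | ⟨t, h1, h2⟩
          · exact Or.inl hh.symm
          · exact Or.inr ⟨t, h2.symm, h1.symm⟩
        rcases eq_or_ne x b0 with rfl | hxb0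
        · rcases reachb0 y (Ne.symm hxy) hyv with hh | ⟨t, h1, h2⟩
          · exact Or.inl hh
          · exact Or.inr ⟨t, h1, h2⟩
        rcases eq_or_ne y b0 with rfl | hyb0
        · rcases reachb0 x hxb0 hxv with hh | ⟨t, h1, h2⟩
          · exact Or.inl hh.symm
          · exact Or.inr ⟨t, h2.symm, h1.symm⟩
        rcases eq_or_ne x u with rfl | hxu
        · exact Or.inl (hu' y (Ne.symm hxy) hyv hyb0)
        rcases eq_or_ne y u with rfl | hyu
        · exact Or.inl (hu' x hxu hxv hxb0).symm
        · exact Or.inr ⟨u, (hu' x hxu hxv hxb0).symm, hu' y hyu hyv hyb0⟩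
  -- the structural data
  set eK := Ks.equivFin with heK
  set bOf : Fin Ks.card → V := fun i => ((eK.symm i : Ks) : V) with hbOfdef
  have hbK : ∀ i, bOf i ∈ Ks := fun i => (eK.symm i).2
  have hbB : ∀ i, bOf i ∈ Bs := fun i => hKsub (hbK i)
  have hbinj : Function.Injective bOf := fun i i' h =>
    eK.symm.injective (Subtype.coe_injective h)
  set fib : Fin Ks.card → Finset V := fun i => As.filter (fun a => G.Adj a (bOf i)) with hfibdef
  set m : Fin Ks.card → ℕ := fun i => (fib i).card with hmdef
  set aOf : ∀ i : Fin Ks.card, Fin (m i) → V := fun i j => (((fib i).equivFin).symm j : V)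
    with haOfdef
  have haF : ∀ i j, aOf i j ∈ fib i := fun i j => ((fib i).equivFin.symm j).2
  have haA : ∀ i j, aOf i j ∈ As := fun i j => (Finset.mem_filter.mp (haF i j)).1
  have haadj : ∀ i j, G.Adj (aOf i j) (bOf i) := fun i j => (Finset.mem_filter.mp (haF i j)).2
  set wOf : Fin Ws.card → V := fun j => ((Ws.equivFin.symm j : Ws) : V) with hwOfdef
  have hwW : ∀ j, wOf j ∈ Ws := fun j => (Ws.equivFin.symm j).2
  have hwB : ∀ j, wOf j ∈ Bs := fun j => hWsub (hwW j)
  have hm1 : ∀ i, 1 ≤ m i := by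
    intro i
    obtain ⟨-, a, ha, hab⟩ := Finset.mem_filter.mp (hbK i)
    exact Finset.card_pos.mpr ⟨a, Finset.mem_filter.mpr ⟨ha, hab⟩⟩
  have huB : u ∉ Bs := fun hc => hnadjuv ((hBv u hc).symm)
  have hvB : v ∉ Bs := fun hc => (hBnv v hc) rfl
  have huA : u ∉ As := fun hc => (hAmem u hc).1 rfl
  have hvA : v ∉ As := fun hc => (hAmem v hc).2.1 rfl
  have hAnB : ∀ {x}, x ∈ As → x ∉ Bs := fun hx => (hAmem _ hx).2.2
  -- key adjacency iff
  have hab_iff : ∀ i j i', G.Adj (aOf i j) (bOf i') ↔ i = i' := by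
    intro i j i'
    constructor
    · intro h
      exact (hbinj (hAuniq _ (haA i j) _ _ (hbB i') (hbB i) h (haadj i j))).symm
    · rintro rfl
      exact haadj i j
  have hba_iff : ∀ i i' j', G.Adj (bOf i) (aOf i' j') ↔ i' = i := by
    intro i i' j'
    rw [G.adj_comm]
    exact hab_iff i' j' i
  have nvu : ¬ G.Adj v u := fun h => hnadjuv h.symm
  have gub : ∀ i, G.Adj u (bOf i) := fun i => hBu _ (hbB i)
  have gua : ∀ i j, G.Adj u (aOf i j) := fun i j => hAu _ (haA i j)
  have guw : ∀ j, G.Adj u (wOf j) := fun j => hBu _ (hwB j)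
  have gvb : ∀ i, G.Adj v (bOf i) := fun i => hBv _ (hbB i)
  have gvw : ∀ j, G.Adj v (wOf j) := fun j => hBv _ (hwB j)
  have nva : ∀ i j, ¬ G.Adj v (aOf i j) := fun i j => hAnadjv _ (haA i j)
  have nav : ∀ i j, ¬ G.Adj (aOf i j) v := fun i j h => nva i j h.symm
  have nbb : ∀ i i', ¬ G.Adj (bOf i) (bOf i') := fun i i' => hBindep _ (hbB i) _ (hbB i')
  have naa : ∀ i j i' j', ¬ G.Adj (aOf i j) (aOf i' j') := fun i j i' j' =>
    hAindep _ (haA i j) _ (haA i' j')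
  have nww : ∀ j j', ¬ G.Adj (wOf j) (wOf j') := fun j j' => hBindep _ (hwB j) _ (hwB j')
  have nbw : ∀ i j', ¬ G.Adj (bOf i) (wOf j') := fun i j' => hBindep _ (hbB i) _ (hwB j')
  have nwb : ∀ j i', ¬ G.Adj (wOf j) (bOf i') := fun j i' => hBindep _ (hwB j) _ (hbB i')
  have naw : ∀ i j j', ¬ G.Adj (aOf i j) (wOf j') := fun i j j' h =>
    hWnK _ (hwW j') (hAKs _ (haA i j) _ (hwB j') h)
  have nwa : ∀ j' i j, ¬ G.Adj (wOf j') (aOf i j) := fun j' i j h => naw i j j' h.symm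
  -- injectivity
  have hinj : Function.Injective (st19theta u v bOf aOf wOf) := by
    intro p q h
    rcases p with (⟨⟩ | ⟨⟩) | (i | (⟨i, j⟩ | j)) <;>
      rcases q with (⟨⟩ | ⟨⟩) | (i' | (⟨i', j'⟩ | j')) <;>
      simp only [st19theta] at h
    · rfl
    · exact absurd h (Ne.symm hvu)
    · exact absurd (hbB i') (h ▸ huB)
    · exact absurd (haA i' j') (h ▸ huA)
    · exact absurd (hwB j') (h ▸ huB)
    · exact absurd h hvu
    · rfl
    · exact absurd (hbB i') (h ▸ hvB)
    · exact absurd (haA i' j') (h ▸ hvA)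
    · exact absurd (hwB j') (h ▸ hvB)
    · exact absurd (hbB i) (h.symm ▸ huB)
    · exact absurd (hbB i) (h.symm ▸ hvB)
    · rw [hbinj h]
    · exact absurd (h ▸ hbB i) (hAnB (haA i' j'))
    · exact absurd (hbK i) (h ▸ hWnK _ (hwW j'))
    · exact absurd (haA i j) (h.symm ▸ huA)
    · exact absurd (haA i j) (h.symm ▸ hvA)
    · exact absurd (h.symm ▸ hbB i') (hAnB (haA i j))
    · have hii : i = i' := by
        by_contra hcc
        have h1 := haadj i j
        rw [h] at h1
        exact hcc (hbinj (hAuniq _ (haA i' j') _ _ (hbB i) (hbB i') h1 (haadj i' j')))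
      subst hii
      have hjj : j = j' := (fib i).equivFin.symm.injective (Subtype.coe_injective h)
      subst hjj
      rfl
    · exact absurd (h.symm ▸ hwB j') (hAnB (haA i j))
    · exact absurd (hwB j) (h.symm ▸ huB)
    · exact absurd (hwB j) (h.symm ▸ hvB)
    · exact absurd (hbK i') (h.symm ▸ hWnK _ (hwW j))
    · exact absurd (h ▸ hwB j) (hAnB (haA i' j'))
    · rw [Ws.equivFin.symm.injective (Subtype.coe_injective h)]
  -- surjectivity
  have hsurj : Function.Surjective (st19theta u v bOf aOf wOf) := by
    intro x
    rcases hpart x with rfl | rfl | hxB | hxA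
    · exact ⟨Sum.inl (Sum.inl ()), rfl⟩
    · exact ⟨Sum.inl (Sum.inr ()), rfl⟩
    · by_cases hxK : x ∈ Ks
      · refine ⟨Sum.inr (Sum.inl (eK ⟨x, hxK⟩)), ?_⟩
        simp [st19theta, hbOfdef]
      · have hxW : x ∈ Ws := Finset.mem_sdiff.mpr ⟨hxB, hxK⟩
        refine ⟨Sum.inr (Sum.inr (Sum.inr (Ws.equivFin ⟨x, hxW⟩))), ?_⟩
        simp [st19theta, hwOfdef]
    · obtain ⟨b, hb, hxb⟩ := hAB x hxA
      have hbK' : b ∈ Ks := hAKs x hxA b hb hxb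
      have hbOfi : bOf (eK ⟨b, hbK'⟩) = b := by simp [hbOfdef]
      have hxfib : x ∈ fib (eK ⟨b, hbK'⟩) :=
        Finset.mem_filter.mpr ⟨hxA, by rw [hbOfi]; exact hxb⟩
      refine ⟨Sum.inr (Sum.inr (Sum.inl ⟨eK ⟨b, hbK'⟩,
        (fib (eK ⟨b, hbK'⟩)).equivFin ⟨x, hxfib⟩⟩)), ?_⟩
      simp [st19theta, haOfdef]
  refine ⟨Ks.card, hk2, m, hm1, Ws.card, ⟨SimpleGraph.Iso.symm
    ⟨Equiv.ofBijective _ ⟨hinj, hsurj⟩, ?_⟩⟩⟩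
  intro p q
  show G.Adj (st19theta u v bOf aOf wOf p) (st19theta u v bOf aOf wOf q) ↔
    (Tgraph (Ks.card) m (Ws.card)).Adj p q
  simp only [Tgraph, SimpleGraph.fromRel_adj]
  rcases p with (⟨⟩ | ⟨⟩) | (i | (⟨i, j⟩ | j)) <;>
    rcases q with (⟨⟩ | ⟨⟩) | (i' | (⟨i', j'⟩ | j'))
  · simp [st19theta, Trel, G.irrefl]
  · simp [st19theta, Trel, hnadjuv]
  · simp [st19theta, Trel, gub i']
  · simp [st19theta, Trel, gua i' j']
  · simp [st19theta, Trel, guw j']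
  · simp [st19theta, Trel, nvu]
  · simp [st19theta, Trel, G.irrefl]
  · simp [st19theta, Trel, gvb i']
  · simp [st19theta, Trel, nva i' j']
  · simp [st19theta, Trel, gvw j']
  · simp [st19theta, Trel, (gub i).symm]
  · simp [st19theta, Trel, (gvb i).symm]
  · simp [st19theta, Trel, nbb i i']
  · simp [st19theta, Trel, hba_iff i i' j']
  · simp [st19theta, Trel, nbw i j']
  · simp [st19theta, Trel, (gua i j).symm]
  · simp [st19theta, Trel, nav i j]
  · simp [st19theta, Trel, hab_iff i j i']
  · simp [st19theta, Trel, naa i j i' j']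
  · simp [st19theta, Trel, naw i j j']
  · simp [st19theta, Trel, (guw j).symm]
  · simp [st19theta, Trel, (gvw j).symm]
  · simp [st19theta, Trel, nwb j i']
  · simp [st19theta, Trel, nwa j i' j']
  · simp [st19theta, Trel, nww j j']
end
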